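/- Suppose the matrix A is invertible (rank two). If C_1 λ_1 / C_3 − (b_0 C_1/C_3 + a_0)(d_0 C_1/C_3 + c_0) < 0, then x_{2n} → 0, x_{2n+1} → ∞, y_{2n} → 0 and y_{2n+1} → ∞ as n → ∞. -/

import Mathlib

open Filter Topology

/-!
The ratio `r n = x n / y n` obeys `r (n + 1) = (b n * r n + a n) / (d n * r n + c n)`, so `r (2 n)`
is iterated by the Möbius map of the positive matrix `A`. These iterates converge to the fixed point
`t = A₁₂ / (λ₁ - A₁₁)` given by the Perron eigenvector: the cross-ratio of `r (2 n)` with the two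
fixed points is multiplied by `λ₂ / λ₁` at each step, and `C1 / C3 = t`. From
`x (n + 1) * x n = b n * r n + a n`, the quotient `x (2 n + 2) / x (2 n)` tends to
`(b₁ t₁ + a₁) / (b₀ t + a₀)` with `t₁ = lim r (2 n + 1)`, and the hypothesis says exactly that this
limit is `< 1`, so the ratio test gives `x (2 n) → 0`. Then `x (2 n + 1)` and `y (2 n + 1)` are
comparable to `1 / x (2 n)`, and `y (2 n + 2)` to `1 / x (2 n + 1)`.
-/

section Mobius

variable {a b c d μ t s : ℝ}

theorem mobius_sub_of_eigenvector (h₁ : a * t + b = μ * t) (h₂ : c * t + d = μ)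
    (hs : c * s + d ≠ 0) :
    (a * s + b) / (c * s + d) - t = (a + d - μ) * (s - t) / (c * s + d) := by
  rw [div_sub' hs]
  congr 1
  linear_combination h₁ - s * h₂

theorem mobius_div_sub_sub {μ' t' : ℝ} (h₁ : a * t + b = μ * t) (h₂ : c * t + d = μ)
    (h₁' : a * t' + b = μ' * t') (h₂' : c * t' + d = μ') (hμ : μ + μ' = a + d)
    (hs : c * s + d ≠ 0) :
    ((a * s + b) / (c * s + d) - t) / ((a * s + b) / (c * s + d) - t') =
      μ' / μ * ((s - t) / (s - t')) := by
  rw [mobius_sub_of_eigenvector h₁ h₂ hs, mobius_sub_of_eigenvector h₁' h₂' hs,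
    show a + d - μ = μ' by linarith, show a + d - μ' = μ by linarith,
    div_div_div_cancel_right₀ hs, mul_div_mul_comm]

theorem eigenvector_of_sq_eq (hμ : (2 * μ - (a + d)) ^ 2 = (a - d) ^ 2 + 4 * b * c)
    (ha : μ ≠ a) :
    a * (b / (μ - a)) + b = μ * (b / (μ - a)) ∧ c * (b / (μ - a)) + d = μ := by
  have h : μ - a ≠ 0 := sub_ne_zero.mpr ha
  constructor
  · field_simp
    ring
  · field_simp
    linear_combination -hμ / 4

theorem tendsto_of_tendsto_div_sub_sub {α : Type*} {l : Filter α} {s : α → ℝ} {t t' : ℝ}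
    (hs : ∀ n, s n ≠ t') (ht : t ≠ t')
    (h : Tendsto (fun n => (s n - t) / (s n - t')) l (𝓝 0)) : Tendsto s l (𝓝 t) := by
  have hs_eq : ∀ n, (t - (s n - t) / (s n - t') * t') / (1 - (s n - t) / (s n - t')) = s n := by
    intro n
    have h₁ : s n - t' ≠ 0 := sub_ne_zero.mpr (hs n)
    have h₂ : 1 - (s n - t) / (s n - t') = (t - t') / (s n - t') := by
      field_simp
      ring
    rw [h₂, div_eq_iff (div_ne_zero (sub_ne_zero.mpr ht) h₁)]
    field_simp
    ring
  have hlim := ((tendsto_const_nhds (x := t)).sub (h.mul_const t')).div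
    ((tendsto_const_nhds (x := 1)).sub h) (by norm_num)
  rw [zero_mul, sub_zero, sub_zero, div_one] at hlim
  exact hlim.congr hs_eq

theorem lt_add_add_sqrt_div_two (hbc : 0 < b * c) :
    a < (a + d + √((a - d) ^ 2 + 4 * b * c)) / 2 := by
  have := Real.lt_sqrt_of_sq_lt (x := a - d) (y := (a - d) ^ 2 + 4 * b * c) (by linarith)
  linarith

theorem add_sub_sqrt_div_two_lt (hbc : 0 < b * c) :
    (a + d - √((a - d) ^ 2 + 4 * b * c)) / 2 < a := by
  have := Real.neg_sqrt_lt_of_sq_lt (x := a - d) (y := (a - d) ^ 2 + 4 * b * c) (by linarith)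
  linarith

theorem tendsto_mobius_iterate {D μ₁ : ℝ} (ha : 0 < a) (hb : 0 < b) (hc : 0 < c) (hd : 0 < d)
    (hD : D = √((a - d) ^ 2 + 4 * b * c))
    (hμ₁ : μ₁ = (a + d + D) / 2) {s : ℕ → ℝ} (hs0 : 0 < s 0)
    (hs : ∀ n, s (n + 1) = (a * s n + b) / (c * s n + d)) :
    Tendsto s atTop (𝓝 (b / (μ₁ - a))) := by
  obtain ⟨μ₂, hμ₂⟩ : ∃ μ₂, μ₂ = (a + d - D) / 2 := ⟨_, rfl⟩
  have hbc : 0 < b * c := mul_pos hb hc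
  have hD2 : D ^ 2 = (a - d) ^ 2 + 4 * b * c := hD ▸ Real.sq_sqrt (by positivity)
  have hμ₁a : a < μ₁ := hμ₁ ▸ hD ▸ lt_add_add_sqrt_div_two hbc
  have hμ₂a : μ₂ < a := hμ₂ ▸ hD ▸ add_sub_sqrt_div_two_lt hbc
  have hsum : μ₁ + μ₂ = a + d := by rw [hμ₁, hμ₂]; ring
  have hμ₂μ₁ : |μ₂ / μ₁| < 1 := by
    have hμ₁pos : 0 < μ₁ := by linarith
    rw [abs_div, abs_of_pos hμ₁pos, div_lt_one hμ₁pos, abs_lt]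
    constructor <;> linarith
  obtain ⟨ht₁, ht₂⟩ := eigenvector_of_sq_eq (b := b) (c := c) (d := d)
    (by rw [hμ₁]; linear_combination hD2) hμ₁a.ne'
  obtain ⟨ht'₁, ht'₂⟩ := eigenvector_of_sq_eq (b := b) (c := c) (d := d)
    (by rw [hμ₂]; linear_combination hD2) hμ₂a.ne
  set t := b / (μ₁ - a)
  set t' := b / (μ₂ - a)
  have ht' : t' < 0 := div_neg_of_pos_of_neg hb (by linarith)
  have hpos : ∀ n, 0 < s n := by
    intro n
    induction n with
    | zero => exact hs0
    | succ n ih => rw [hs]; positivity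
  have hden : ∀ n, c * s n + d ≠ 0 := fun n => by have := hpos n; positivity
  have hgeom : ∀ n, (s n - t) / (s n - t') = (μ₂ / μ₁) ^ n * ((s 0 - t) / (s 0 - t')) := by
    intro n
    induction n with
    | zero => simp
    | succ n ih =>
      rw [hs, mobius_div_sub_sub ht₁ ht₂ ht'₁ ht'₂ hsum (hden n), ih, pow_succ]
      ring
  refine tendsto_of_tendsto_div_sub_sub (fun n => by have := hpos n; linarith)
    (by linarith [div_pos hb (sub_pos.mpr hμ₁a)]) ?_
  have hlim :=
    (tendsto_pow_atTop_nhds_zero_of_abs_lt_one hμ₂μ₁).mul_const ((s 0 - t) / (s 0 - t'))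
  rw [zero_mul] at hlim
  exact hlim.congr fun n => (hgeom n).symm

end Mobius

theorem Function.Periodic.apply_two_mul {α : Type*} {f : ℕ → α} (h : Function.Periodic f 2)
    (n : ℕ) : f (2 * n) = f 0 := by
  rw [mul_comm]
  exact h.nat_mul_eq n

theorem Function.Periodic.apply_two_mul_add_one {α : Type*} {f : ℕ → α}
    (h : Function.Periodic f 2) (n : ℕ) : f (2 * n + 1) = f 1 := by
  rw [mul_comm, add_comm]
  exact h.nat_mul n 1

section Algebra

variable {x y a b c d : ℝ}

theorem div_add_div_mul_eq (hx : x ≠ 0) : (a / x + b / y) * x = b * (x / y) + a := by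
  rw [add_mul, div_mul_cancel₀ _ hx, div_mul_eq_mul_div, mul_div_assoc, add_comm]

theorem div_add_div_div_eq (hx : x ≠ 0) :
    (a / x + b / y) / (c / x + d / y) = (b * (x / y) + a) / (d * (x / y) + c) := by
  rw [← mul_div_mul_right _ _ hx, div_add_div_mul_eq hx, div_add_div_mul_eq hx]

theorem mobius_comp {a₀ b₀ c₀ d₀ a₁ b₁ c₁ d₁ r : ℝ} (h : d₀ * r + c₀ ≠ 0) :
    (b₁ * ((b₀ * r + a₀) / (d₀ * r + c₀)) + a₁) /
        (d₁ * ((b₀ * r + a₀) / (d₀ * r + c₀)) + c₁) =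
      ((a₁ * d₀ + b₀ * b₁) * r + (a₀ * b₁ + a₁ * c₀)) /
        ((b₀ * d₁ + c₁ * d₀) * r + (a₀ * d₁ + c₀ * c₁)) := by
  rw [← mul_div_mul_right _ _ h, add_mul, add_mul, mul_assoc, mul_assoc, div_mul_cancel₀ _ h]
  ring

theorem div_mul_div_mul_add_eq {p q e u : ℝ} (he : e ≠ 0) :
    q / u * (p / e * x + y) = q / e * ((p * x + e * y) / u) := by
  field_simp

end Algebra

section System

variable {x y a b c d : ℕ → ℝ}

theorem pos_of_rec (hx0 : 0 < x 0) (hy0 : 0 < y 0)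
    (hapos : ∀ n, 0 < a n) (hbpos : ∀ n, 0 < b n)
    (hcpos : ∀ n, 0 < c n) (hdpos : ∀ n, 0 < d n)
    (hxrec : ∀ n, x (n + 1) = a n / x n + b n / y n)
    (hyrec : ∀ n, y (n + 1) = c n / x n + d n / y n) (n : ℕ) : 0 < x n ∧ 0 < y n := by
  induction n with
  | zero => exact ⟨hx0, hy0⟩
  | succ n ih =>
    obtain ⟨hx, hy⟩ := ih
    have := hapos n; have := hbpos n; have := hcpos n; have := hdpos n
    rw [hxrec, hyrec]
    constructor <;> positivity

theorem tendsto_ratio_two_mul {D μ₁ : ℝ} (hxpos : ∀ n, 0 < x n) (hypos : ∀ n, 0 < y n)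
    (hapos : ∀ n, 0 < a n) (hbpos : ∀ n, 0 < b n)
    (hcpos : ∀ n, 0 < c n) (hdpos : ∀ n, 0 < d n)
    (haper : Function.Periodic a 2) (hbper : Function.Periodic b 2)
    (hcper : Function.Periodic c 2) (hdper : Function.Periodic d 2)
    (hxrec : ∀ n, x (n + 1) = a n / x n + b n / y n)
    (hyrec : ∀ n, y (n + 1) = c n / x n + d n / y n)
    (hD : D = √((a 1 * d 0 + b 0 * b 1 - (a 0 * d 1 + c 0 * c 1)) ^ 2 +
      4 * (a 0 * b 1 + a 1 * c 0) * (b 0 * d 1 + c 1 * d 0)))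
    (hμ₁ : μ₁ = (a 1 * d 0 + b 0 * b 1 + (a 0 * d 1 + c 0 * c 1) + D) / 2) :
    Tendsto (fun n => x (2 * n) / y (2 * n)) atTop
      (𝓝 ((a 0 * b 1 + a 1 * c 0) / (μ₁ - (a 1 * d 0 + b 0 * b 1)))) := by
  have hratio : ∀ n, x (n + 1) / y (n + 1) =
      (b n * (x n / y n) + a n) / (d n * (x n / y n) + c n) :=
    fun n => by rw [hxrec, hyrec]; exact div_add_div_div_eq (hxpos n).ne'
  refine tendsto_mobius_iterate
    (add_pos (mul_pos (hapos 1) (hdpos 0)) (mul_pos (hbpos 0) (hbpos 1)))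
    (add_pos (mul_pos (hapos 0) (hbpos 1)) (mul_pos (hapos 1) (hcpos 0)))
    (add_pos (mul_pos (hbpos 0) (hdpos 1)) (mul_pos (hcpos 1) (hdpos 0)))
    (add_pos (mul_pos (hapos 0) (hdpos 1)) (mul_pos (hcpos 0) (hcpos 1)))
    hD hμ₁ (div_pos (hxpos 0) (hypos 0)) fun n => ?_
  have hden : d 0 * (x (2 * n) / y (2 * n)) + c 0 ≠ 0 := by
    have := hxpos (2 * n); have := hypos (2 * n); have := hcpos 0; have := hdpos 0
    positivity
  rw [mul_add_one, hratio (2 * n + 1), hratio (2 * n), haper.apply_two_mul, hbper.apply_two_mul,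
    hcper.apply_two_mul, hdper.apply_two_mul, haper.apply_two_mul_add_one,
    hbper.apply_two_mul_add_one, hcper.apply_two_mul_add_one, hdper.apply_two_mul_add_one]
  exact mobius_comp hden

theorem mul_succ_eq_of_rec (hxrec : ∀ n, x (n + 1) = a n / x n + b n / y n)
    (hyrec : ∀ n, y (n + 1) = c n / x n + d n / y n) {n : ℕ} (hx : x n ≠ 0) :
    x (n + 1) * x n = b n * (x n / y n) + a n ∧ y (n + 1) * x n = d n * (x n / y n) + c n := by
  rw [hxrec, hyrec]
  exact ⟨div_add_div_mul_eq hx, div_add_div_mul_eq hx⟩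

theorem tendsto_ratio_two_mul_add_one {t : ℝ} (hxpos : ∀ n, 0 < x n)
    (haper : Function.Periodic a 2) (hbper : Function.Periodic b 2)
    (hcper : Function.Periodic c 2) (hdper : Function.Periodic d 2)
    (hxrec : ∀ n, x (n + 1) = a n / x n + b n / y n)
    (hyrec : ∀ n, y (n + 1) = c n / x n + d n / y n)
    (hr : Tendsto (fun n => x (2 * n) / y (2 * n)) atTop (𝓝 t)) (ht : d 0 * t + c 0 ≠ 0) :
    Tendsto (fun n => x (2 * n + 1) / y (2 * n + 1)) atTop
      (𝓝 ((b 0 * t + a 0) / (d 0 * t + c 0))) := by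
  refine (((hr.const_mul _).add_const _).div ((hr.const_mul _).add_const _) ht).congr fun n => ?_
  obtain ⟨hx, hy⟩ := mul_succ_eq_of_rec hxrec hyrec (hxpos (2 * n)).ne'
  simp only [haper.apply_two_mul, hbper.apply_two_mul, hcper.apply_two_mul,
    hdper.apply_two_mul] at hx hy
  rw [Pi.div_apply, ← hx, ← hy, mul_div_mul_right _ _ (hxpos (2 * n)).ne']

theorem tendsto_two_mul_nhds_zero {t t₁ : ℝ} (hxpos : ∀ n, 0 < x n)
    (hapos : ∀ n, 0 < a n) (hbpos : ∀ n, 0 < b n)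
    (haper : Function.Periodic a 2) (hbper : Function.Periodic b 2)
    (hxrec : ∀ n, x (n + 1) = a n / x n + b n / y n)
    (hyrec : ∀ n, y (n + 1) = c n / x n + d n / y n) (ht : 0 < t)
    (hr : Tendsto (fun n => x (2 * n) / y (2 * n)) atTop (𝓝 t))
    (hr₁ : Tendsto (fun n => x (2 * n + 1) / y (2 * n + 1)) atTop (𝓝 t₁))
    (hkey : b 1 * t₁ + a 1 < b 0 * t + a 0) :
    Tendsto (fun n => x (2 * n)) atTop (𝓝 0) := by
  have hden : 0 < b 0 * t + a 0 := by have := hapos 0; have := hbpos 0; positivity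
  have hquot : Tendsto (fun n => ‖x (2 * (n + 1))‖ / ‖x (2 * n)‖) atTop
      (𝓝 ((b 1 * t₁ + a 1) / (b 0 * t + a 0))) := by
    refine (((hr₁.const_mul _).add_const _).div ((hr.const_mul _).add_const _) hden.ne').congr
      fun n => ?_
    have hx₀ := (mul_succ_eq_of_rec hxrec hyrec (hxpos (2 * n)).ne').1
    have hx₁ := (mul_succ_eq_of_rec hxrec hyrec (hxpos (2 * n + 1)).ne').1
    rw [haper.apply_two_mul, hbper.apply_two_mul] at hx₀
    rw [haper.apply_two_mul_add_one, hbper.apply_two_mul_add_one] at hx₁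
    rw [Pi.div_apply, ← hx₀, ← hx₁, mul_comm (x (2 * n + 1)) (x (2 * n)),
      mul_div_mul_right _ _ (hxpos _).ne', Real.norm_of_nonneg (hxpos _).le,
      Real.norm_of_nonneg (hxpos _).le, mul_add_one]
  exact (summable_of_ratio_test_tendsto_lt_one ((div_lt_one hden).mpr hkey)
    (Eventually.of_forall fun n => (hxpos _).ne') hquot).tendsto_atTop_zero

theorem tendsto_of_tendsto_ratio_two_mul {t : ℝ} (hxpos : ∀ n, 0 < x n)
    (hapos : ∀ n, 0 < a n) (hbpos : ∀ n, 0 < b n)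
    (hcpos : ∀ n, 0 < c n) (hdpos : ∀ n, 0 < d n)
    (haper : Function.Periodic a 2) (hbper : Function.Periodic b 2)
    (hcper : Function.Periodic c 2) (hdper : Function.Periodic d 2)
    (hxrec : ∀ n, x (n + 1) = a n / x n + b n / y n)
    (hyrec : ∀ n, y (n + 1) = c n / x n + d n / y n) (ht : 0 < t)
    (hr : Tendsto (fun n => x (2 * n) / y (2 * n)) atTop (𝓝 t))
    (hkey : (a 1 * d 0 + b 0 * b 1) * t + (a 0 * b 1 + a 1 * c 0) <
      (b 0 * t + a 0) * (d 0 * t + c 0)) :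
    Tendsto (fun n => x (2 * n)) atTop (𝓝 0) ∧
      Tendsto (fun n => x (2 * n + 1)) atTop atTop ∧
      Tendsto (fun n => y (2 * n)) atTop (𝓝 0) ∧
      Tendsto (fun n => y (2 * n + 1)) atTop atTop := by
  have := hapos 0; have := hbpos 0; have := hcpos 0; have := hdpos 0
  have hden : 0 < d 0 * t + c 0 := by positivity
  have hr₁ := tendsto_ratio_two_mul_add_one hxpos haper hbper hcper hdper hxrec hyrec hr hden.ne'
  have hx₀ : Tendsto (fun n => x (2 * n)) atTop (𝓝 0) := by
    refine tendsto_two_mul_nhds_zero hxpos hapos hbpos haper hbper hxrec hyrec ht hr hr₁ ?_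
    refine lt_of_mul_lt_mul_right ?_ hden.le
    rw [add_mul, mul_assoc, div_mul_cancel₀ _ hden.ne']
    linarith
  have hinv : Tendsto (fun n => (x (2 * n))⁻¹) atTop atTop :=
    tendsto_inv_nhdsGT_zero.comp
      (tendsto_nhdsWithin_iff.mpr ⟨hx₀, Eventually.of_forall fun n => hxpos _⟩)
  have hsucc : ∀ n, x (n + 1) = (b n * (x n / y n) + a n) * (x n)⁻¹ ∧
      y (n + 1) = (d n * (x n / y n) + c n) * (x n)⁻¹ := fun n => by
    obtain ⟨hx, hy⟩ := mul_succ_eq_of_rec hxrec hyrec (hxpos n).ne'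
    simp only [eq_mul_inv_iff_mul_eq₀ (hxpos n).ne', hx, hy, and_self]
  have hx₁ : Tendsto (fun n => x (2 * n + 1)) atTop atTop := by
    refine (Tendsto.pos_mul_atTop (by positivity) ((hr.const_mul (b 0)).add_const (a 0)) hinv).congr
      fun n => ?_
    rw [(hsucc _).1, haper.apply_two_mul, hbper.apply_two_mul]
  have hy₁ : Tendsto (fun n => y (2 * n + 1)) atTop atTop := by
    refine (Tendsto.pos_mul_atTop (by positivity) ((hr.const_mul (d 0)).add_const (c 0)) hinv).congr
      fun n => ?_
    rw [(hsucc _).2, hcper.apply_two_mul, hdper.apply_two_mul]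
  have hy₀ : Tendsto (fun n => y (2 * (n + 1))) atTop (𝓝 0) := by
    have hlim := ((hr₁.const_mul (d 1)).add_const (c 1)).mul (tendsto_inv_atTop_zero.comp hx₁)
    rw [mul_zero] at hlim
    refine hlim.congr fun n => ?_
    rw [mul_add_one, (hsucc (2 * n + 1)).2, hcper.apply_two_mul_add_one,
      hdper.apply_two_mul_add_one]
    rfl
  exact ⟨hx₀, hx₁, (tendsto_add_atTop_iff_nat 1).mp hy₀, hy₁⟩

end System

theorem stmt_17_general
    (x y a b c d : ℕ → ℝ)
    (hx0 : 0 < x 0) (hy0 : 0 < y 0)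
    (hapos : ∀ n, 0 < a n) (hbpos : ∀ n, 0 < b n)
    (hcpos : ∀ n, 0 < c n) (hdpos : ∀ n, 0 < d n)
    (haper : ∀ n, a (n + 2) = a n) (hbper : ∀ n, b (n + 2) = b n)
    (hcper : ∀ n, c (n + 2) = c n) (hdper : ∀ n, d (n + 2) = d n)
    (hxrec : ∀ n, x (n + 1) = a n / x n + b n / y n)
    (hyrec : ∀ n, y (n + 1) = c n / x n + d n / y n)
    (D lam1 lam2 : ℝ)
    (hD : D = Real.sqrt ((a 1 * d 0 + b 0 * b 1 - a 0 * d 1 - c 0 * c 1) ^ 2 +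
      4 * (a 0 * b 1 + a 1 * c 0) * (b 0 * d 1 + c 1 * d 0)))
    (hlam1 : lam1 = (a 1 * d 0 + b 0 * b 1 + a 0 * d 1 + c 0 * c 1 + D) / 2)
    (hlam2 : lam2 = (a 1 * d 0 + b 0 * b 1 + a 0 * d 1 + c 0 * c 1 - D) / 2)
    (C1 C3 : ℝ)
    (hC1 : C1 = (a 0 * b 1 + a 1 * c 0) / (lam1 - lam2) *
      ((b 0 * d 1 + c 1 * d 0) / (lam1 - (a 1 * d 0 + b 0 * b 1)) * x 0 + y 0))
    (hC3 : C3 = ((b 0 * d 1 + c 1 * d 0) * x 0 + (lam1 - (a 1 * d 0 + b 0 * b 1)) * y 0) /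
      (lam1 - lam2))
    (hlt : C1 * lam1 / C3 - (b 0 * (C1 / C3) + a 0) * (d 0 * (C1 / C3) + c 0) < 0)
    : Tendsto (fun n => x (2 * n)) atTop (nhds 0) ∧
      Tendsto (fun n => x (2 * n + 1)) atTop atTop ∧
      Tendsto (fun n => y (2 * n)) atTop (nhds 0) ∧
      Tendsto (fun n => y (2 * n + 1)) atTop atTop := by
  obtain ⟨hxpos, hypos⟩ :=
    forall_and.mp (pos_of_rec hx0 hy0 hapos hbpos hcpos hdpos hxrec hyrec)
  have hD' : D = √((a 1 * d 0 + b 0 * b 1 - (a 0 * d 1 + c 0 * c 1)) ^ 2 +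
      4 * (a 0 * b 1 + a 1 * c 0) * (b 0 * d 1 + c 1 * d 0)) := by rw [hD, sub_add_eq_sub_sub]
  have hlam1' : lam1 = (a 1 * d 0 + b 0 * b 1 + (a 0 * d 1 + c 0 * c 1) + D) / 2 := by
    rw [hlam1, add_assoc (a 1 * d 0 + b 0 * b 1)]
  have hr := tendsto_ratio_two_mul hxpos hypos hapos hbpos hcpos hdpos haper hbper hcper hdper
    hxrec hyrec hD' hlam1'
  have := hapos 0; have := hapos 1; have := hbpos 0; have := hbpos 1
  have := hcpos 0; have := hcpos 1; have := hdpos 0; have := hdpos 1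
  have hlt₁ : 0 < lam1 - (a 1 * d 0 + b 0 * b 1) :=
    sub_pos.mpr (hlam1' ▸ hD' ▸ lt_add_add_sqrt_div_two (by positivity))
  have hC3pos : 0 < C3 := by
    rw [hC3, show lam1 - lam2 = D by rw [hlam1, hlam2]; ring, hD]
    positivity
  set t := (a 0 * b 1 + a 1 * c 0) / (lam1 - (a 1 * d 0 + b 0 * b 1))
  have hC : C1 / C3 = t := by
    rw [hC1, hC3, div_mul_div_mul_add_eq hlt₁.ne', ← hC3, mul_div_cancel_right₀ _ hC3pos.ne']
  have heig : lam1 * t = (a 1 * d 0 + b 0 * b 1) * t + (a 0 * b 1 + a 1 * c 0) := by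
    linear_combination mul_div_cancel₀ (a 0 * b 1 + a 1 * c 0) hlt₁.ne'
  rw [mul_div_right_comm, hC] at hlt
  exact tendsto_of_tendsto_ratio_two_mul hxpos hapos hbpos hcpos hdpos haper hbper hcper hdper
    hxrec hyrec (by positivity) hr (by linarith)

theorem stmt_17
    (x y a b c d : ℕ → ℝ)
    (hx0 : 0 < x 0) (hy0 : 0 < y 0)
    (hapos : ∀ n, 0 < a n) (hbpos : ∀ n, 0 < b n)
    (hcpos : ∀ n, 0 < c n) (hdpos : ∀ n, 0 < d n)
    (haper : ∀ n, a (n + 2) = a n) (hbper : ∀ n, b (n + 2) = b n)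
    (hcper : ∀ n, c (n + 2) = c n) (hdper : ∀ n, d (n + 2) = d n)
    (hxrec : ∀ n, x (n + 1) = a n / x n + b n / y n)
    (hyrec : ∀ n, y (n + 1) = c n / x n + d n / y n)
    (A : Matrix (Fin 2) (Fin 2) ℝ)
    (hAdef : A = !![a 1 * d 0 + b 0 * b 1, a 0 * b 1 + a 1 * c 0;
                    b 0 * d 1 + c 1 * d 0, a 0 * d 1 + c 0 * c 1])
    (hA : IsUnit A)
    (D lam1 lam2 : ℝ)
    (hD : D = Real.sqrt ((a 1 * d 0 + b 0 * b 1 - a 0 * d 1 - c 0 * c 1) ^ 2 +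
      4 * (a 0 * b 1 + a 1 * c 0) * (b 0 * d 1 + c 1 * d 0)))
    (hlam1 : lam1 = (a 1 * d 0 + b 0 * b 1 + a 0 * d 1 + c 0 * c 1 + D) / 2)
    (hlam2 : lam2 = (a 1 * d 0 + b 0 * b 1 + a 0 * d 1 + c 0 * c 1 - D) / 2)
    (C1 C3 : ℝ)
    (hC1 : C1 = (a 0 * b 1 + a 1 * c 0) / (lam1 - lam2) *
      ((b 0 * d 1 + c 1 * d 0) / (lam1 - (a 1 * d 0 + b 0 * b 1)) * x 0 + y 0))
    (hC3 : C3 = ((b 0 * d 1 + c 1 * d 0) * x 0 + (lam1 - (a 1 * d 0 + b 0 * b 1)) * y 0) /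
      (lam1 - lam2))
    (hlt : C1 * lam1 / C3 - (b 0 * (C1 / C3) + a 0) * (d 0 * (C1 / C3) + c 0) < 0)
    : Tendsto (fun n => x (2 * n)) atTop (nhds 0) ∧
      Tendsto (fun n => x (2 * n + 1)) atTop atTop ∧
      Tendsto (fun n => y (2 * n)) atTop (nhds 0) ∧
      Tendsto (fun n => y (2 * n + 1)) atTop atTop :=
  stmt_17_general x y a b c d hx0 hy0 hapos hbpos hcpos hdpos haper hbper hcper hdper hxrec hyrec D
    lam1 lam2 hD hlam1 hlam2 C1 C3 hC1 hC3 hlt
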